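/- Let X, Y ∈ ℂ^{n,m} with rank(X) = r and reduced SVD X = U₁Σ₁V₁* (U₁ ∈ ℂ^{n,r}). If X*Y + Y*X is positive semidefinite, then U₁*(YX⁺ + (YX⁺)*)U₁ is positive semidefinite, where X⁺ is the Moore–Penrose pseudoinverse of X. -/
import Mathlib

open Matrix
open scoped ComplexOrder

/-- The four Penrose conditions characterizing the Moore–Penrose pseudoinverse. -/
def IsMoorePenrose {n m : Type*} [Fintype n] [Fintype m]
    (A : Matrix n m ℂ) (Ap : Matrix m n ℂ) : Prop :=
  A * Ap * A = A ∧ Ap * A * Ap = Ap ∧ (A * Ap)ᴴ = A * Ap ∧ (Ap * A)ᴴ = Ap * A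

lemma mp_unique {n m : Type*} [Fintype n] [Fintype m]
    (A : Matrix n m ℂ) (B C : Matrix m n ℂ)
    (hB : IsMoorePenrose A B) (hC : IsMoorePenrose A C) : B = C := by
  obtain ⟨hB1, hB2, hB3, hB4⟩ := hB
  obtain ⟨hC1, hC2, hC3, hC4⟩ := hC
  have h1 : B = B * A * C := by
    calc B = B * A * B := hB2.symm
    _ = B * (A * B)ᴴ := by rw [hB3, Matrix.mul_assoc]
    _ = B * ((A * C * A) * B)ᴴ := by rw [hC1]
    _ = B * (A * B)ᴴ * (A * C)ᴴ := by
        simp only [conjTranspose_mul, Matrix.mul_assoc]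
    _ = B * (A * B) * (A * C) := by rw [hB3, hC3]
    _ = B * A * C := by
        rw [← Matrix.mul_assoc B A B, hB2, Matrix.mul_assoc]
  have h2 : C = B * A * C := by
    calc C = C * A * C := hC2.symm
    _ = (C * A)ᴴ * C := by rw [hC4]
    _ = (C * (A * B * A))ᴴ * C := by rw [hB1]
    _ = (B * A)ᴴ * ((C * A)ᴴ * C) := by
        simp only [conjTranspose_mul, Matrix.mul_assoc]
    _ = B * A * (C * A * C) := by rw [hB4, hC4, Matrix.mul_assoc]
    _ = B * A * C := by rw [hC2]
  exact h1.trans h2.symm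

/-- If `X*Y + Y*X ⪰ 0` then the compression `U₁*(YX⁺ + (YX⁺)*)U₁ ⪰ 0`, where
`X = U₁Σ₁V₁*` is a reduced SVD of `X` and `X⁺` is its Moore–Penrose pseudoinverse. -/
theorem compressed_psd {n m r : ℕ}
    (X Y : Matrix (Fin n) (Fin m) ℂ) (Xp : Matrix (Fin m) (Fin n) ℂ)
    (hXp : IsMoorePenrose X Xp)
    (hr : X.rank = r)
    (U₁ : Matrix (Fin n) (Fin r) ℂ) (V₁ : Matrix (Fin m) (Fin r) ℂ)
    (σ : Fin r → ℝ) (hσ : ∀ i, 0 < σ i)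
    (hU : U₁ᴴ * U₁ = 1) (hV : V₁ᴴ * V₁ = 1)
    (hX : X = U₁ * Matrix.diagonal (fun i => (σ i : ℂ)) * V₁ᴴ)
    (hpsd : (Xᴴ * Y + Yᴴ * X).PosSemidef) :
    (U₁ᴴ * (Y * Xp + (Y * Xp)ᴴ) * U₁).PosSemidef := by
  set D : Matrix (Fin r) (Fin r) ℂ := Matrix.diagonal (fun i => (σ i : ℂ)) with hD
  set Di : Matrix (Fin r) (Fin r) ℂ := Matrix.diagonal (fun i => ((σ i : ℂ))⁻¹) with hDi
  have hσ0 : ∀ i, (σ i : ℂ) ≠ 0 := fun i => Complex.ofReal_ne_zero.mpr (hσ i).ne'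
  have hDDi : D * Di = 1 := by
    rw [hD, hDi, diagonal_mul_diagonal]
    simp [mul_inv_cancel₀, hσ0]
  have hDiD : Di * D = 1 := by
    rw [hD, hDi, diagonal_mul_diagonal]
    simp [inv_mul_cancel₀, hσ0]
  have hDih : Diᴴ = Di := by
    rw [hDi, Matrix.diagonal_conjTranspose]
    refine congrArg Matrix.diagonal (funext fun i => ?_)
    simp [Pi.star_apply, Complex.conj_ofReal]
  have hDh : Dᴴ = D := by
    rw [hD, Matrix.diagonal_conjTranspose]
    refine congrArg Matrix.diagonal (funext fun i => ?_)
    simp [Pi.star_apply, Complex.conj_ofReal]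
  have eU : ∀ {k : ℕ} (Z : Matrix (Fin r) (Fin k) ℂ), U₁ᴴ * (U₁ * Z) = Z := fun Z => by
    rw [← Matrix.mul_assoc, hU, Matrix.one_mul]
  have eV : ∀ {k : ℕ} (Z : Matrix (Fin r) (Fin k) ℂ), V₁ᴴ * (V₁ * Z) = Z := fun Z => by
    rw [← Matrix.mul_assoc, hV, Matrix.one_mul]
  have eD : ∀ {k : ℕ} (Z : Matrix (Fin r) (Fin k) ℂ), D * (Di * Z) = Z := fun Z => by
    rw [← Matrix.mul_assoc, hDDi, Matrix.one_mul]
  have eDi : ∀ {k : ℕ} (Z : Matrix (Fin r) (Fin k) ℂ), Di * (D * Z) = Z := fun Z => by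
    rw [← Matrix.mul_assoc, hDiD, Matrix.one_mul]
  have hcand : IsMoorePenrose X (V₁ * Di * U₁ᴴ) := by
    refine ⟨?_, ?_, ?_, ?_⟩
    · simp only [hX, Matrix.mul_assoc, eU, eV, eD, eDi]
    · simp only [hX, Matrix.mul_assoc, eU, eV, eD, eDi]
    · have h1 : X * (V₁ * Di * U₁ᴴ) = U₁ * U₁ᴴ := by
        simp only [hX, Matrix.mul_assoc, eU, eV, eD, eDi]
      rw [h1]
      simp [conjTranspose_mul]
    · have h1 : (V₁ * Di * U₁ᴴ) * X = V₁ * V₁ᴴ := by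
        simp only [hX, Matrix.mul_assoc, eU, eV, eD, eDi]
      rw [h1]
      simp [conjTranspose_mul]
  have hXpEq : Xp = V₁ * Di * U₁ᴴ := mp_unique X Xp _ hXp hcand
  have key : U₁ᴴ * (Y * Xp + (Y * Xp)ᴴ) * U₁
      = (V₁ * Di)ᴴ * (Xᴴ * Y + Yᴴ * X) * (V₁ * Di) := by
    rw [hXpEq, hX]
    simp only [conjTranspose_mul, conjTranspose_conjTranspose, hDih, hDh,
      Matrix.mul_add, Matrix.add_mul, Matrix.mul_assoc, eU, eV, eD, eDi,
      hU, hV, hDDi, hDiD, Matrix.mul_one, Matrix.one_mul]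
  rw [key]
  exact hpsd.conjTranspose_mul_mul_same (V₁ * Di)
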